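/- arXiv:2105.07163 — 3 statements merged into one kernel-verified Lean document; each statement's English description precedes it below -/
import Mathlib

section
/- If V : ℝ → ℝ is even, convex on (0,∞), nonnegative, integrable with ∫ V = 1, and satisfies V''(z) ≥ λ·1(z < δ) on (0,∞) for some λ, δ > 0, then there exists c > 0 such that the Fourier transform v(ω) = ∫ V(x) e^{-2πixω} dx satisfies v(ω) ≥ c · min{1, |ω|^{-2}} for all ω ∈ ℝ. -/
/-!
Put `b = δ / 2` and `W x = λ / 2 * max (b - x) 0 ^ 2`. As `deriv` is `0` where `V` is not
differentiable, `V'' ≥ λ > 0` on `(0, δ)` makes `V` differentiable on a dense subset of `(0, δ)`,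
hence, by convexity and continuity of `V'`, on all of it; so `V - λ x² / 2` is convex on `(0, δ)`.
There `V - W` is this function plus the convex `λ / 2 * (x² - max (b - x) 0 ^ 2)`, while on
`(b, ∞)` it is `V`; convexity on two overlapping open intervals glues to convexity on `(0, ∞)`.

A convex integrable `R` on `(0, ∞)` has `∫₀^∞ R x cos x ≥ 0`: on each period `R` lies above its
chord through `π / 2` and `3π / 2` exactly where `cos ≥ 0`, and the chord integrates to `0`
against `cos`. So at frequency `a = 2π|ω|` the cosine transform of `V` dominates that of `W`,
which is `λ (a b - sin (a b)) / a³`, and `t - sin t ≥ min t³ t / 18` gives the bound.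
-/

open Real Set MeasureTheory Filter Topology

theorem exists_differentiableAt_of_deriv_deriv_ne_zero {f : ℝ → ℝ} {a b : ℝ} (hab : a < b)
    (h : ∀ x ∈ Ioo a b, deriv (deriv f) x ≠ 0) : ∃ y ∈ Ioo a b, DifferentiableAt ℝ f y := by
  by_contra! hnd
  obtain ⟨x, hx⟩ := nonempty_Ioo.2 hab
  have hzero : deriv f =ᶠ[𝓝 x] fun _ => 0 := by
    filter_upwards [Ioo_mem_nhds hx.1 hx.2] with y hy
    exact deriv_zero_of_not_differentiableAt (hnd y hy)
  exact h x hx (by simp [hzero.deriv_eq])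

theorem ConvexOn.hasDerivAt_of_continuousAt_deriv {U : Set ℝ} {f : ℝ → ℝ}
    (hf : ConvexOn ℝ U f) (hU : IsOpen U)
    (hdense : ∀ a b, a < b → Ioo a b ⊆ U → ∃ y ∈ Ioo a b, DifferentiableAt ℝ f y)
    {x : ℝ} (hx : x ∈ U) (hcont : ContinuousAt (deriv f) x) :
    HasDerivAt f (deriv f x) x := by
  have hxi : x ∈ interior U := hU.interior_eq.symm ▸ hx
  have hleft : deriv f x ≤ derivWithin f (Iio x) x := by
    by_contra! hlt
    obtain ⟨a, b, ⟨hax, hxb⟩, hsub⟩ := mem_nhds_iff_exists_Ioo_subset.1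
      ((hU.eventually_mem hx).and (hcont.eventually (lt_mem_nhds hlt)))
    obtain ⟨y, hy, hyd⟩ := hdense a x hax fun z hz => (hsub ⟨hz.1, hz.2.trans hxb⟩).1
    have hyU := hsub ⟨hy.1, hy.2.trans hxb⟩
    have := (hf.deriv_le_slope hyU.1 hx hy.2 hyd).trans
      (hf.slope_le_leftDeriv_of_mem_interior hyU.1 hxi hy.2)
    linarith [hyU.2]
  have hright : derivWithin f (Ioi x) x ≤ deriv f x := by
    by_contra! hlt
    obtain ⟨a, b, ⟨hax, hxb⟩, hsub⟩ := mem_nhds_iff_exists_Ioo_subset.1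
      ((hU.eventually_mem hx).and (hcont.eventually (gt_mem_nhds hlt)))
    obtain ⟨y, hy, hyd⟩ := hdense x b hxb fun z hz => (hsub ⟨hax.trans hz.1, hz.2⟩).1
    have hyU := hsub ⟨hax.trans hy.1, hy.2⟩
    have := (hf.rightDeriv_le_slope_of_mem_interior hxi hyU.1 hy.1).trans
      (hf.slope_le_deriv hx hyU.1 hy.1 hyd)
    linarith [hyU.2]
  have hle := hf.leftDeriv_le_rightDeriv_of_mem_interior hxi
  have hl := hf.hasDerivWithinAt_leftDeriv_of_mem_interior hxi
  have hr := hf.hasDerivWithinAt_rightDeriv_of_mem_interior hxi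
  rw [show derivWithin f (Iio x) x = deriv f x by linarith] at hl
  rw [show derivWithin f (Ioi x) x = deriv f x by linarith] at hr
  rw [← hasDerivWithinAt_univ, ← Iic_union_Ici]
  exact hl.Iic_of_Iio.union hr.Ici_of_Ioi

theorem convexOn_sub_half_mul_sq {D : Set ℝ} (hD : IsOpen D) (hD' : Convex ℝ D)
    {f f' f'' : ℝ → ℝ} {lam : ℝ} (hf : ∀ x ∈ D, HasDerivAt f (f' x) x)
    (hf' : ∀ x ∈ D, HasDerivAt f' (f'' x) x) (hlam : ∀ x ∈ D, lam ≤ f'' x) :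
    ConvexOn ℝ D (fun x => f x - lam / 2 * x ^ 2) := by
  have hsq : ∀ x : ℝ, HasDerivAt (fun x => lam / 2 * x ^ 2) (lam * x) x := fun x =>
    ((hasDerivAt_pow 2 x).const_mul (lam / 2)).congr_deriv (by ring)
  refine convexOn_of_hasDerivWithinAt2_nonneg (f' := fun x => f' x - lam * x)
    (f'' := fun x => f'' x - lam) hD'
    (fun x hx => ((hf x hx).sub (hsq x)).continuousAt.continuousWithinAt) ?_ ?_ ?_
  all_goals rw [hD.interior_eq]
  · exact fun x hx => ((hf x hx).sub (hsq x)).hasDerivWithinAt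
  · exact fun x hx =>
      ((hf' x hx).sub (by simpa using (hasDerivAt_id x).const_mul lam)).hasDerivWithinAt
  · exact fun x hx => sub_nonneg.2 (hlam x hx)

theorem ConvexOn.sub_half_mul_sq_of_le_deriv_deriv {f : ℝ → ℝ} {lam a b : ℝ}
    (hf : ConvexOn ℝ (Ioo a b) f) (hlam : 0 < lam)
    (hf'' : ∀ x ∈ Ioo a b, lam ≤ deriv (deriv f) x) :
    ConvexOn ℝ (Ioo a b) fun x => f x - lam / 2 * x ^ 2 := by
  have hne : ∀ x ∈ Ioo a b, deriv (deriv f) x ≠ 0 := fun x hx => (hlam.trans_le (hf'' x hx)).ne'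
  have hf' : ∀ x ∈ Ioo a b, HasDerivAt (deriv f) (deriv (deriv f) x) x := fun x hx =>
    (differentiableAt_of_deriv_ne_zero (hne x hx)).hasDerivAt
  refine convexOn_sub_half_mul_sq isOpen_Ioo (convex_Ioo a b) (fun x hx => ?_) hf' hf''
  exact hf.hasDerivAt_of_continuousAt_deriv isOpen_Ioo
    (fun c d hcd hsub => exists_differentiableAt_of_deriv_deriv_ne_zero hcd fun y hy =>
      hne y (hsub hy)) hx (hf' x hx).continuousAt

theorem slope_le_slope_of_slope_le_slope {f : ℝ → ℝ} {u v w : ℝ} (huv : u < v) (hvw : v < w)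
    (h : slope f u v ≤ slope f v w) : slope f u v ≤ slope f u w := by
  rw [← lineMap_slope_slope_sub_div_sub f u v w (huv.trans hvw).ne]
  exact (left_le_lineMap_iff_le (div_pos (sub_pos.2 hvw) (sub_pos.2 (huv.trans hvw)))).2 h

theorem slope_le_slope_of_slope_le_slope' {f : ℝ → ℝ} {u v w : ℝ} (huv : u < v) (hvw : v < w)
    (h : slope f u v ≤ slope f v w) : slope f u w ≤ slope f v w := by
  rw [← lineMap_slope_slope_sub_div_sub f u v w (huv.trans hvw).ne]
  exact (lineMap_le_right_iff_le ((div_lt_one (sub_pos.2 (huv.trans hvw))).2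
    (by linarith))).2 h

theorem ConvexOn.slope_le_slope {f : ℝ → ℝ} {s : Set ℝ} (hf : ConvexOn ℝ s f) {x y z : ℝ}
    (hx : x ∈ s) (hz : z ∈ s) (hxy : x < y) (hyz : y < z) : slope f x y ≤ slope f y z := by
  simpa only [slope_def_field] using hf.slope_mono_adjacent hx hz hxy hyz

theorem ConvexOn.Ioi_of_Ioc_of_Ici {f : ℝ → ℝ} {a m : ℝ} (h₁ : ConvexOn ℝ (Ioc a m) f)
    (h₂ : ConvexOn ℝ (Ici m) f)
    (hm : ∀ u w, a < u → u < m → m < w → slope f u m ≤ slope f m w) :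
    ConvexOn ℝ (Ioi a) f := by
  refine convexOn_of_slope_mono_adjacent (convex_Ioi a) fun {x y z} hx hz hxy hyz => ?_
  simp only [← slope_def_field]
  rcases le_or_gt z m with hzm | hmz
  · exact h₁.slope_le_slope ⟨hx, by linarith⟩ ⟨hz, hzm⟩ hxy hyz
  rcases le_or_gt m x with hmx | hxm
  · exact h₂.slope_le_slope hmx (by simp only [mem_Ici]; linarith) hxy hyz
  rcases lt_trichotomy y m with hym | rfl | hmy
  · exact (h₁.slope_le_slope (z := m) ⟨hx, hxm.le⟩ ⟨hx.trans hxm, le_rfl⟩ hxy hym).trans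
      (slope_le_slope_of_slope_le_slope hym hmz (hm y z (hx.trans hxy) hym hmz))
  · exact hm x z hx hxy hyz
  · exact (slope_le_slope_of_slope_le_slope' hxm hmy (hm x y hx hxm hmy)).trans
      (h₂.slope_le_slope self_mem_Ici (by simp only [mem_Ici]; linarith) hmy hyz)

theorem ConvexOn.Ioi_of_Ioo_of_Ioi {f : ℝ → ℝ} {a b c : ℝ} (h₁ : ConvexOn ℝ (Ioo a c) f)
    (h₂ : ConvexOn ℝ (Ioi b) f) (hbc : b < c) : ConvexOn ℝ (Ioi a) f := by
  obtain ⟨m, hbm, hmc⟩ := exists_between hbc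
  refine (h₁.subset (Ioc_subset_Ioo_right hmc) (convex_Ioc a m)).Ioi_of_Ioc_of_Ici
    (h₂.subset (Ici_subset_Ioi.2 hbm) (convex_Ici m)) fun u w hu hum hmw => ?_
  obtain ⟨m', hmm', hm'⟩ := exists_between (lt_min hmc hmw)
  calc slope f u m ≤ slope f m m' :=
        h₁.slope_le_slope ⟨hu, hum.trans hmc⟩ ⟨by linarith, hm'.trans_le (min_le_left _ _)⟩
          hum hmm'
    _ ≤ slope f m w := h₂.slope_mono hbm ⟨hbm.trans hmm', hmm'.ne'⟩
        ⟨hbm.trans hmw, hmw.ne'⟩ (hm'.le.trans (min_le_right _ _))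

theorem convexOn_univ_sq_sub_max_sub_sq (b : ℝ) :
    ConvexOn ℝ univ (fun x : ℝ => x ^ 2 - max (b - x) 0 ^ 2) := by
  have hmax : ConvexOn ℝ univ (fun x : ℝ => max (x - b) 0) :=
    ((convexOn_id convex_univ).sub (concaveOn_const b convex_univ)).sup
      (convexOn_const 0 convex_univ)
  have hlin : ConvexOn ℝ univ (fun x : ℝ => 2 * b * x - b ^ 2) :=
    ((LinearMap.mul ℝ ℝ (2 * b)).convexOn convex_univ).sub (concaveOn_const _ convex_univ)
  refine (hlin.add (hmax.pow (fun x _ => le_max_right _ _) 2)).congr fun x _ => ?_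
  simp only [Pi.add_apply, Pi.pow_apply]
  rcases le_total x b with h | h
  · rw [max_eq_right (by linarith), max_eq_left (by linarith)]; ring
  · rw [max_eq_left (by linarith), max_eq_right (by linarith)]; ring

theorem convexOn_sub_max_sub_sq {V : ℝ → ℝ} {lam b δ : ℝ} (hV : ConvexOn ℝ (Ioi 0) V)
    (hVlam : ConvexOn ℝ (Ioo 0 δ) fun x => V x - lam / 2 * x ^ 2) (hlam : 0 ≤ lam)
    (hb : 0 ≤ b) (hbδ : b < δ) : ConvexOn ℝ (Ioi 0) fun x => V x - lam / 2 * max (b - x) 0 ^ 2 := by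
  refine ConvexOn.Ioi_of_Ioo_of_Ioi (b := b) ?_ ?_ hbδ
  · refine (hVlam.add (((convexOn_univ_sq_sub_max_sub_sq b).subset (subset_univ _)
      (convex_Ioo 0 δ)).smul (by positivity : (0 : ℝ) ≤ lam / 2))).congr fun x _ => ?_
    simp only [Pi.add_apply, smul_eq_mul]
    ring
  · refine (hV.subset (Ioi_subset_Ioi hb) (convex_Ioi b)).congr fun x (hx : b < x) => ?_
    simp [max_eq_right (sub_nonpos.2 hx.le)]

theorem sub_secant_eq (f : ℝ → ℝ) (p q x : ℝ) :
    f x - (f p + slope f p q * (x - p)) = (slope f p x - slope f p q) * (x - p) := by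
  have h := sub_smul_slope_vadd f p x
  rw [smul_eq_mul, vadd_eq_add] at h
  linear_combination -h

section Secant

variable {f : ℝ → ℝ} {s : Set ℝ} {p q x : ℝ}

theorem ConvexOn.le_secant (hf : ConvexOn ℝ s f) (hp : p ∈ s) (hq : q ∈ s) (hpx : p ≤ x)
    (hxq : x ≤ q) : f x ≤ f p + slope f p q * (x - p) := by
  rcases hpx.eq_or_lt with rfl | hpx
  · simp
  have hx : x ∈ s := hf.1.ordConnected.out hp hq ⟨hpx.le, hxq⟩
  have hslope := hf.slope_mono hp ⟨hx, hpx.ne'⟩ ⟨hq, (hpx.trans_le hxq).ne'⟩ hxq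
  have := sub_secant_eq f p q x
  nlinarith

theorem ConvexOn.secant_le (hf : ConvexOn ℝ s f) (hp : p ∈ s) (hq : q ∈ s) (hx : x ∈ s)
    (hpq : p < q) (hxpq : x ≤ p ∨ q ≤ x) : f p + slope f p q * (x - p) ≤ f x := by
  have := sub_secant_eq f p q x
  rcases hxpq with hxp | hqx
  · rcases hxp.eq_or_lt with rfl | hxp
    · simp
    have := hf.slope_mono hp ⟨hx, hxp.ne⟩ ⟨hq, hpq.ne'⟩ (hxp.trans hpq).le
    nlinarith
  · have := hf.slope_mono hp ⟨hq, hpq.ne'⟩ ⟨hx, (hpq.trans_le hqx).ne'⟩ hqx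
    nlinarith

end Secant

theorem IntegrableOn.mul_cos_mul {f : ℝ → ℝ} {s : Set ℝ} (hf : IntegrableOn f s) (a : ℝ) :
    IntegrableOn (fun x => f x * cos (a * x)) s :=
  hf.mul_bdd (by fun_prop) (ae_of_all _ fun x => (norm_eq_abs _).trans_le (abs_cos_le_one _))

theorem integral_mul_cos_nonneg_of_convexOn {f : ℝ → ℝ} (hf : ConvexOn ℝ (Ioo 0 (2 * π)) f)
    (hfi : IntervalIntegrable f volume 0 (2 * π)) : 0 ≤ ∫ x in 0..2 * π, f x * cos x := by
  have hp : π / 2 ∈ Ioo 0 (2 * π) := ⟨by positivity, by linarith [pi_pos]⟩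
  have hq : 3 * π / 2 ∈ Ioo 0 (2 * π) := ⟨by positivity, by linarith [pi_pos]⟩
  set m := slope f (π / 2) (3 * π / 2)
  set ℓ : ℝ → ℝ := fun x => f (π / 2) + m * (x - π / 2)
  have hℓ : ∫ x in 0..2 * π, ℓ x * cos x = 0 := by
    have hderiv : ∀ x, HasDerivAt (fun x => ℓ x * sin x + m * cos x) (ℓ x * cos x) x := by
      intro x
      have hℓ' : HasDerivAt (fun x => f (π / 2) + m * (x - π / 2)) m x := by
        simpa using ((hasDerivAt_id x).sub_const (π / 2)).const_mul m |>.const_add (f (π / 2))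
      exact ((hℓ'.mul (hasDerivAt_sin x)).add ((hasDerivAt_cos x).const_mul m)).congr_deriv
        (by ring)
    rw [intervalIntegral.integral_eq_sub_of_hasDerivAt (fun x _ => hderiv x)
      ((by fun_prop : Continuous fun x => ℓ x * cos x).intervalIntegrable _ _)]
    simp
  have hpt : ∀ x ∈ Ioo 0 (2 * π), 0 ≤ (f x - ℓ x) * cos x := by
    intro x hx
    rcases le_total x (π / 2) with hxp | hpx
    · exact mul_nonneg (sub_nonneg.2 (hf.secant_le hp hq hx (by linarith [pi_pos]) (.inl hxp)))
        (cos_nonneg_of_mem_Icc ⟨by linarith [hx.1, pi_pos], hxp⟩)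
    rcases le_total x (3 * π / 2) with hxq | hqx
    · exact mul_nonneg_of_nonpos_of_nonpos (sub_nonpos.2 (hf.le_secant hp hq hpx hxq))
        (cos_nonpos_of_pi_div_two_le_of_le hpx (by linarith))
    · refine mul_nonneg
        (sub_nonneg.2 (hf.secant_le hp hq hx (by linarith [pi_pos]) (.inr hqx))) ?_
      rw [← cos_sub_two_pi]
      exact cos_nonneg_of_mem_Icc ⟨by linarith, by linarith [hx.2]⟩
  have hfcos := hfi.mul_continuousOn continuous_cos.continuousOn
  have hℓcos : IntervalIntegrable (fun x => ℓ x * cos x) volume 0 (2 * π) :=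
    (by fun_prop : Continuous fun x => ℓ x * cos x).intervalIntegrable _ _
  calc (0 : ℝ) ≤ ∫ x in 0..2 * π, (f x - ℓ x) * cos x := by
        rw [intervalIntegral.integral_of_le (by positivity), integral_Ioc_eq_integral_Ioo]
        exact setIntegral_nonneg measurableSet_Ioo hpt
    _ = ∫ x in 0..2 * π, f x * cos x := by
        simp only [sub_mul]
        rw [intervalIntegral.integral_sub hfcos hℓcos, hℓ, sub_zero]

theorem integral_Ioi_mul_cos_nonneg_of_convexOn {f : ℝ → ℝ} (hf : ConvexOn ℝ (Ioi 0) f)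
    (hfi : IntegrableOn f (Ioi 0)) : 0 ≤ ∫ x in Ioi 0, f x * cos x := by
  have hfcos : IntegrableOn (fun x => f x * cos x) (Ioi 0) := by
    simpa using IntegrableOn.mul_cos_mul hfi 1
  have hfi' : ∀ n : ℕ, IntervalIntegrable f volume (n * (2 * π)) ((n + 1) * (2 * π)) :=
    fun n => (intervalIntegrable_iff_integrableOn_Ioc_of_le (by gcongr; linarith)).2 <|
      hfi.mono_set fun x hx => lt_of_le_of_lt (by positivity) hx.1
  have hperiod : ∀ n : ℕ, 0 ≤ ∫ x in n * (2 * π)..(n + 1) * (2 * π), f x * cos x := by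
    intro n
    have hconv : ConvexOn ℝ (Ioo 0 (2 * π)) fun x => f (x + n * (2 * π)) :=
      (hf.translate_left (n * (2 * π))).subset
        (fun x hx => show 0 < n * (2 * π) + x by have := hx.1; positivity) (convex_Ioo _ _)
    have hint : IntervalIntegrable (fun x => f (x + n * (2 * π))) volume 0 (2 * π) := by
      have := (hfi' n).comp_add_right (n * (2 * π))
      rwa [sub_self, show (n + 1) * (2 * π) - n * (2 * π) = 2 * π by ring] at this
    have := integral_mul_cos_nonneg_of_convexOn hconv hint
    have hshift : (fun x => f (x + n * (2 * π)) * cos x)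
        = fun x => (fun y => f y * cos y) (x + n * (2 * π)) := by
      simp only [cos_add_nat_mul_two_pi]
    rwa [hshift, intervalIntegral.integral_comp_add_right (fun x => f x * cos x), zero_add,
      show 2 * π + n * (2 * π) = (n + 1) * (2 * π) by ring] at this
  have hsum : ∀ N : ℕ, ∫ x in (0 : ℝ)..N * (2 * π), f x * cos x
      = ∑ n ∈ Finset.range N, ∫ x in n * (2 * π)..(n + 1) * (2 * π), f x * cos x := by
    intro N
    have := intervalIntegral.sum_integral_adjacent_intervals (a := fun n : ℕ => n * (2 * π))
      (n := N) fun n _ => by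
        push_cast
        exact (hfi' n).mul_continuousOn continuous_cos.continuousOn
    push_cast at this
    rw [zero_mul] at this
    exact this.symm
  refine ge_of_tendsto' (intervalIntegral_tendsto_integral_Ioi 0 hfcos
    (tendsto_natCast_atTop_atTop.atTop_mul_const (by positivity : (0 : ℝ) < 2 * π))) fun N => ?_
  rw [hsum]
  exact Finset.sum_nonneg fun n _ => hperiod n

theorem integral_Ioi_mul_cos_mul_nonneg_of_convexOn {f : ℝ → ℝ} (hf : ConvexOn ℝ (Ioi 0) f)
    (hfi : IntegrableOn f (Ioi 0)) {a : ℝ} (ha : 0 < a) :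
    0 ≤ ∫ x in Ioi 0, f x * cos (a * x) := by
  have hg : ConvexOn ℝ (Ioi 0) fun y => f (a⁻¹ * y) :=
    (hf.comp_linearMap (LinearMap.mul ℝ ℝ a⁻¹)).subset
      (fun y (hy : 0 < y) => show 0 < a⁻¹ * y by positivity) (convex_Ioi 0)
  have hgi : IntegrableOn (fun y => f (a⁻¹ * y)) (Ioi 0) :=
    (integrableOn_Ioi_comp_mul_left_iff f 0 (inv_pos.2 ha)).2 (by rwa [mul_zero])
  have hscale := integral_comp_mul_left_Ioi (fun y => f (a⁻¹ * y) * cos y) 0 ha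
  simp only [inv_mul_cancel_left₀ ha.ne', mul_zero] at hscale
  rw [hscale]
  exact smul_nonneg (inv_nonneg.2 ha.le) (integral_Ioi_mul_cos_nonneg_of_convexOn hg hgi)

theorem integrableOn_Ioi_max_sub_sq {b : ℝ} (hb : 0 ≤ b) :
    IntegrableOn (fun x => max (b - x) 0 ^ 2) (Ioi 0) := by
  rw [← Ioc_union_Ioi_eq_Ioi hb]
  refine ((by fun_prop : Continuous fun x : ℝ => max (b - x) 0 ^ 2).integrableOn_Icc.mono_set
    Ioc_subset_Icc_self).union (integrableOn_zero.congr_fun (fun x (hx : b < x) => ?_)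
      measurableSet_Ioi)
  simp [max_eq_right (sub_nonpos.2 hx.le)]

theorem integral_Ioi_max_sub_sq_mul_cos {a b : ℝ} (ha : a ≠ 0) (hb : 0 ≤ b) :
    ∫ x in Ioi 0, max (b - x) 0 ^ 2 * cos (a * x) = 2 * (a * b - sin (a * b)) / a ^ 3 := by
  have hF : ∀ x, HasDerivAt (fun x => (b - x) ^ 2 * sin (a * x) / a
      - 2 * (b - x) * cos (a * x) / a ^ 2 - 2 * sin (a * x) / a ^ 3)
      ((b - x) ^ 2 * cos (a * x)) x := by
    intro x
    have hax : HasDerivAt (fun x => a * x) a x := by simpa using (hasDerivAt_id x).const_mul a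
    have hbx : HasDerivAt (fun x => b - x) (-1) x := by simpa using (hasDerivAt_id x).const_sub b
    refine ((((hbx.fun_pow 2).mul hax.sin).div_const a).sub
      (((hbx.const_mul 2).mul hax.cos).div_const (a ^ 2)) |>.sub
      ((hax.sin.const_mul 2).div_const (a ^ 3))).congr_deriv ?_
    field_simp
    ring
  rw [setIntegral_eq_of_subset_of_forall_sdiff_eq_zero (s := Ioc 0 b) measurableSet_Ioi
      Ioc_subset_Ioi_self fun x hx => by simp [(not_le.1 fun h => hx.2 ⟨hx.1, h⟩).le],
    ← intervalIntegral.integral_of_le hb,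
    intervalIntegral.integral_congr (g := fun x => (b - x) ^ 2 * cos (a * x))
      fun x hx => by rw [uIcc_of_le hb] at hx; simp [max_eq_left (sub_nonneg.2 hx.2)],
    intervalIntegral.integral_eq_sub_of_hasDerivAt (fun x _ => hF x)
      ((by fun_prop : Continuous fun x => (b - x) ^ 2 * cos (a * x)).intervalIntegrable _ _)]
  field_simp
  simp
  ring

theorem le_integral_Ioi_mul_cos {V : ℝ → ℝ} {lam a b : ℝ} (hV : IntegrableOn V (Ioi 0))
    (hR : ConvexOn ℝ (Ioi 0) fun x => V x - lam / 2 * max (b - x) 0 ^ 2) (ha : 0 < a)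
    (hb : 0 ≤ b) : lam * (a * b - sin (a * b)) / a ^ 3 ≤ ∫ x in Ioi 0, V x * cos (a * x) := by
  have hW := (integrableOn_Ioi_max_sub_sq hb).const_mul (lam / 2)
  have hRpos := integral_Ioi_mul_cos_mul_nonneg_of_convexOn hR (hV.sub hW) ha
  simp only [sub_mul] at hRpos
  rw [integral_sub (IntegrableOn.mul_cos_mul hV a) (IntegrableOn.mul_cos_mul hW a)] at hRpos
  simp only [mul_assoc] at hRpos
  rw [integral_const_mul, integral_Ioi_max_sub_sq_mul_cos ha.ne' hb] at hRpos
  linarith [show lam / 2 * (2 * (a * b - sin (a * b)) / a ^ 3)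
    = lam * (a * b - sin (a * b)) / a ^ 3 by ring]

theorem pow_three_div_le_sub_sin {t : ℝ} (h0 : 0 ≤ t) (h1 : t ≤ 1) : t ^ 3 / 9 ≤ t - sin t := by
  have hb := sin_bound (x := t) (by rwa [abs_of_nonneg h0])
  rw [abs_of_nonneg h0] at hb
  have ht5 : t ^ 5 ≤ t ^ 3 := pow_le_pow_of_le_one h0 h1 (by norm_num)
  linarith [(abs_le.1 hb).2, pow_nonneg h0 3]

theorem min_pow_three_div_le_sub_sin {t : ℝ} (ht : 0 ≤ t) : min (t ^ 3) t / 18 ≤ t - sin t := by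
  rcases le_total t 1 with h1 | h1
  · linarith [min_le_left (t ^ 3) t, pow_three_div_le_sub_sin ht h1, pow_nonneg ht 3]
  · have hsin1 := pow_three_div_le_sub_sin zero_le_one le_rfl
    have hlip := (abs_le.1 (abs_sin_sub_sin_le t 1)).2
    rw [abs_of_nonneg (by linarith)] at hlip
    norm_num at hsin1
    have hmin := min_le_right (t ^ 3) t
    rcases le_total t 2 with h2 | h2
    · linarith
    · linarith [sin_le_one t]

theorem integral_eq_two_mul_integral_Ioi_of_even {g : ℝ → ℝ} (hg : ∀ x, g (-x) = g x) :
    ∫ x, g x = 2 * ∫ x in Ioi 0, g x := by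
  rw [← integral_comp_abs]
  congr 1
  ext x
  rcases abs_choice x with h | h <;> rw [h]
  exact (hg x).symm

theorem fourier_re_eq_integral_mul_cos {V : ℝ → ℝ} (hint : Integrable V) (ω : ℝ) :
    (FourierTransform.fourier (fun x => (V x : ℂ)) ω).re = ∫ x, V x * cos (2 * π * ω * x) := by
  rw [Real.fourier_real_eq_integral_exp_smul]
  have hi : Integrable fun x : ℝ => Complex.exp (↑(-2 * π * x * ω) * Complex.I) • (V x : ℂ) :=
    hint.ofReal.bdd_mul (c := 1) (by fun_prop)
      (ae_of_all _ fun x => (Complex.norm_exp_ofReal_mul_I _).le)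
  rw [← RCLike.re_eq_complex_re, ← integral_re hi]
  congr 1
  ext x
  simp only [smul_eq_mul, RCLike.re_to_complex, Complex.mul_re, Complex.exp_ofReal_mul_I_re,
    Complex.exp_ofReal_mul_I_im, Complex.ofReal_re, Complex.ofReal_im, mul_zero, sub_zero]
  rw [← cos_neg]
  ring_nf

theorem le_fourier_re {V : ℝ → ℝ} {lam b ω : ℝ} (heven : ∀ x, V (-x) = V x)
    (hint : Integrable V) (hR : ConvexOn ℝ (Ioi 0) fun x => V x - lam / 2 * max (b - x) 0 ^ 2)
    (hlam : 0 ≤ lam) (hb : 0 ≤ b) (hω : ω ≠ 0) :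
    lam / 9 * min (b ^ 3) (b / (2 * π * ω) ^ 2)
      ≤ (FourierTransform.fourier (fun x => (V x : ℂ)) ω).re := by
  set a := 2 * π * |ω|
  have ha : 0 < a := by positivity
  have hcos : ∫ x, V x * cos (2 * π * ω * x) = 2 * ∫ x in Ioi 0, V x * cos (a * x) := by
    rw [integral_eq_two_mul_integral_Ioi_of_even fun x => by rw [heven, mul_neg, cos_neg]]
    congr 2 with x
    rcases abs_choice ω with h | h <;> simp [a, h]
  have hmin : min ((a * b) ^ 3) (a * b) = a ^ 3 * min (b ^ 3) (b / a ^ 2) := by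
    rw [mul_min_of_nonneg _ _ (by positivity)]
    congr 1 <;> field_simp
  rw [fourier_re_eq_integral_mul_cos hint, hcos,
    show (2 * π * ω) ^ 2 = a ^ 2 by simp [a, mul_pow]]
  calc lam / 9 * min (b ^ 3) (b / a ^ 2)
        = 2 * (lam * (min ((a * b) ^ 3) (a * b) / 18) / a ^ 3) := by
          rw [hmin]; field_simp; ring
    _ ≤ 2 * (lam * (a * b - sin (a * b)) / a ^ 3) := by
          gcongr; exact min_pow_three_div_le_sub_sin (by positivity)
    _ ≤ 2 * ∫ x in Ioi 0, V x * cos (a * x) := by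
          gcongr; exact le_integral_Ioi_mul_cos hint.integrableOn hR ha hb

theorem min_div_max_one_le {A B s : ℝ} (hA : 0 ≤ A) (hB : 0 ≤ B) (hs : 0 < s) :
    min A B / max 1 s ≤ min A (B / s) := by
  have hM : 0 < max 1 s := lt_max_of_lt_left one_pos
  refine le_min ((div_le_div_of_nonneg_right (min_le_left _ _) hM.le).trans
    (div_le_self hA (le_max_left _ _))) ((div_le_div_of_nonneg_right (min_le_right _ _)
      hM.le).trans (div_le_div_of_nonneg_left hB hs (le_max_right _ _)))

theorem stmt0_general (V : ℝ → ℝ) (lam δ : ℝ) (hlam : 0 < lam) (hδ : 0 < δ)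
    (heven : ∀ x, V (-x) = V x)
    (hconv : ConvexOn ℝ (Set.Ioi 0) V)
    (hint : Integrable V)
    (hnorm : ∫ x, V x = 1)
    (hV'' : ∀ z : ℝ, 0 < z → (if z < δ then lam else 0) ≤ deriv (deriv V) z) :
    ∃ c > 0, ∀ ω : ℝ,
      c / max 1 (ω ^ 2) ≤ (FourierTransform.fourier (fun x => (V x : ℂ)) ω).re := by
  set b := δ / 2
  have hVδ : ConvexOn ℝ (Ioo 0 δ) V := hconv.subset Ioo_subset_Ioi_self (convex_Ioo 0 δ)
  have hVlam := hVδ.sub_half_mul_sq_of_le_deriv_deriv hlam fun x hx => by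
    simpa [hx.2] using hV'' x hx.1
  have hR := convexOn_sub_max_sub_sq hconv hVlam hlam.le (half_pos hδ).le (half_lt_self hδ)
  set K := lam / 9 * min (b ^ 3) (b / (2 * π) ^ 2)
  refine ⟨min 1 K, by positivity, fun ω => ?_⟩
  rcases eq_or_ne ω 0 with rfl | hω
  · simp [fourier_re_eq_integral_mul_cos hint, hnorm]
  calc min 1 K / max 1 (ω ^ 2) ≤ K / max 1 (ω ^ 2) := by gcongr; exact min_le_right _ _
    _ ≤ lam / 9 * min (b ^ 3) (b / (2 * π * ω) ^ 2) := by
        rw [mul_div_assoc, mul_pow (2 * π) ω, ← div_div]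
        gcongr
        exact min_div_max_one_le (by positivity) (by positivity) (by positivity)
    _ ≤ _ := le_fourier_re heven hint hR hlam.le (half_pos hδ).le hω

theorem stmt0 (V : ℝ → ℝ) (lam δ : ℝ) (hlam : 0 < lam) (hδ : 0 < δ)
    (heven : ∀ x, V (-x) = V x)
    (hconv : ConvexOn ℝ (Set.Ioi 0) V)
    (hnonneg : ∀ x, 0 ≤ V x)
    (hint : Integrable V)
    (hnorm : ∫ x, V x = 1)
    (hV'' : ∀ z : ℝ, 0 < z → (if z < δ then lam else 0) ≤ deriv (deriv V) z) :
    ∃ c > 0, ∀ ω : ℝ,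
      c / max 1 (ω ^ 2) ≤ (FourierTransform.fourier (fun x => (V x : ℂ)) ω).re :=
  stmt0_general V lam δ hlam hδ heven hconv hint hnorm hV''
end

section
/- Let V : ℝ → ℝ be nonnegative, even, non-increasing on (0,∞), and integrable. Then for any signed measure ν on [0,∞) with locally bounded positive part, ∫_{-∞}^0 (V * ν⁺)(y) dy ≤ (Σ_{k=0}^∞ ∫_k^∞ V) · sup_{x≥0} ν⁺([x,x+1]), and the constant Σ_{k=0}^∞ ∫_k^∞ V(y) dy is finite whenever ∫_ℝ |x| V(x) dx < ∞. -/
open MeasureTheory Set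
open scoped ENNReal

/-! Split `[0, ∞)` into the unit cells `[k, k + 1)`. Since `z ↦ V (y - z)` decreases for `y < 0`,
its integral against `μ` is at most `m · Σₖ V (y - k)`, and integrating `V (y - k) = V (k - y)`
over `y < 0` gives `∫_k^∞ V`. The constant is finite because a point `y` lies in at most
`|y| + 1` of the half-lines `(k, ∞)`, so the sum of the tail integrals is `≤ ∫ (|y| + 1) V y`. -/

theorem lintegral_le_tsum_mul_of_antitoneOn {μ : Measure ℝ} {g : ℝ → ℝ≥0∞} {M : ℝ≥0∞}
    (hg : AntitoneOn g (Ici 0)) (hμ : μ (Iio 0) = 0)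
    (hM : ∀ k : ℕ, μ (Ico (k : ℝ) (k + 1)) ≤ M) :
    ∫⁻ z, g z ∂μ ≤ ∑' k : ℕ, g k * M := by
  have hnonneg : ∀ᵐ z ∂μ, 0 ≤ z :=
    ae_iff.2 (measure_mono_null (fun z (hz : ¬0 ≤ z) => not_le.1 hz) hμ)
  calc ∫⁻ z, g z ∂μ
      ≤ ∫⁻ z, ∑' k : ℕ, (Ico (k : ℝ) (k + 1)).indicator (fun _ => g k) z ∂μ := by
        refine lintegral_mono_ae ?_
        filter_upwards [hnonneg] with z hz
        have hcell : z ∈ Ico (⌊z⌋₊ : ℝ) (⌊z⌋₊ + 1) := ⟨Nat.floor_le hz, Nat.lt_floor_add_one z⟩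
        calc g z ≤ g ⌊z⌋₊ := hg (mem_Ici.2 (Nat.cast_nonneg _)) (mem_Ici.2 hz) hcell.1
          _ = (Ico (⌊z⌋₊ : ℝ) (⌊z⌋₊ + 1)).indicator (fun _ => g ⌊z⌋₊) z :=
            (indicator_of_mem hcell (fun _ => g ⌊z⌋₊)).symm
          _ ≤ _ := ENNReal.le_tsum (α := ℕ) _
    _ = ∑' k : ℕ, g k * μ (Ico (k : ℝ) (k + 1)) := by
        rw [lintegral_tsum fun k => (measurable_const.indicator measurableSet_Ico).aemeasurable]
        exact tsum_congr fun k => lintegral_indicator_const measurableSet_Ico _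
    _ ≤ ∑' k : ℕ, g k * M := ENNReal.tsum_le_tsum fun k => mul_le_mul_right (hM k) _

theorem lintegral_Iio_zero_comp_sub_left (f : ℝ → ℝ≥0∞) (c : ℝ) :
    ∫⁻ y in Iio 0, f (c - y) = ∫⁻ y in Ioi c, f y := by
  have hpre : (fun y : ℝ => c - y) ⁻¹' Ioi c = Iio 0 := by
    ext y; simp
  rw [← hpre]
  exact (Measure.measurePreserving_sub_left volume c).setLIntegral_comp_preimage_emb
    (MeasurableEquiv.subLeft c).measurableEmbedding f _

theorem tsum_indicator_Ioi_natCast_le (f : ℝ → ℝ≥0∞) (y : ℝ) :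
    ∑' k : ℕ, (Ioi (k : ℝ)).indicator f y ≤ ENNReal.ofReal (|y| + 1) * f y := by
  have hvanish : ∀ k ∉ Finset.range ⌈y⌉₊, (Ioi (k : ℝ)).indicator f y = 0 := by
    intro k hk
    refine indicator_of_notMem (not_lt.2 ((Nat.le_ceil y).trans ?_)) _
    exact_mod_cast not_lt.1 (Finset.mem_range.not.1 hk)
  have hceil : (⌈y⌉₊ : ℝ) ≤ |y| + 1 :=
    (Nat.cast_le.2 (Nat.ceil_mono (le_abs_self y))).trans (Nat.ceil_lt_add_one (abs_nonneg y)).le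
  calc ∑' k : ℕ, (Ioi (k : ℝ)).indicator f y
      = ∑ k ∈ Finset.range ⌈y⌉₊, (Ioi (k : ℝ)).indicator f y := tsum_eq_sum hvanish
    _ ≤ ∑ _k ∈ Finset.range ⌈y⌉₊, f y := Finset.sum_le_sum fun k _ => indicator_le_self _ _ y
    _ = ENNReal.ofReal ⌈y⌉₊ * f y := by simp
    _ ≤ ENNReal.ofReal (|y| + 1) * f y := mul_le_mul_left (ENNReal.ofReal_le_ofReal hceil) _

theorem tsum_setLIntegral_Ioi_natCast_le (f : ℝ → ℝ≥0∞) (hf : AEMeasurable f) :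
    ∑' k : ℕ, ∫⁻ y in Ioi (k : ℝ), f y ≤ ∫⁻ y, ENNReal.ofReal (|y| + 1) * f y := by
  calc ∑' k : ℕ, ∫⁻ y in Ioi (k : ℝ), f y
      = ∫⁻ y, ∑' k : ℕ, (Ioi (k : ℝ)).indicator f y := by
        rw [lintegral_tsum fun k => hf.indicator measurableSet_Ioi]
        exact tsum_congr fun k => (lintegral_indicator measurableSet_Ioi f).symm
    _ ≤ ∫⁻ y, ENNReal.ofReal (|y| + 1) * f y :=
        lintegral_mono fun y => tsum_indicator_Ioi_natCast_le f y

theorem ofReal_setIntegral_Ici_eq_setLIntegral_Ioi {f : ℝ → ℝ} (hf : Integrable f)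
    (hf_nonneg : ∀ x, 0 ≤ f x) (a : ℝ) :
    ENNReal.ofReal (∫ y in Ici a, f y) = ∫⁻ y in Ioi a, ENNReal.ofReal (f y) := by
  rw [ofReal_integral_eq_lintegral_ofReal hf.restrict (ae_of_all _ hf_nonneg),
    Measure.restrict_congr_set Ioi_ae_eq_Ici.symm]

theorem tsum_setLIntegral_Ioi_natCast_lt_top {V : ℝ → ℝ} (hint : Integrable V)
    (hmom : Integrable fun x => |x| * V x) :
    ∑' k : ℕ, ∫⁻ y in Ioi (k : ℝ), ENNReal.ofReal (V y) < ⊤ := by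
  have hweighted : Integrable fun y => (|y| + 1) * V y :=
    (hmom.add hint).congr (ae_of_all _ fun y => by simp only [Pi.add_apply]; ring)
  calc ∑' k : ℕ, ∫⁻ y in Ioi (k : ℝ), ENNReal.ofReal (V y)
      ≤ ∫⁻ y, ENNReal.ofReal (|y| + 1) * ENNReal.ofReal (V y) :=
        tsum_setLIntegral_Ioi_natCast_le _ hint.aemeasurable.ennreal_ofReal
    _ = ∫⁻ y, ENNReal.ofReal ((|y| + 1) * V y) :=
        lintegral_congr fun y => (ENNReal.ofReal_mul (by positivity)).symm
    _ < ⊤ := hweighted.lintegral_lt_top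

theorem lintegral_ofReal_sub_le_tsum {V : ℝ → ℝ} {μ : Measure ℝ} {M : ℝ≥0∞}
    (heven : ∀ x, V (-x) = V x) (hanti : AntitoneOn V (Ioi 0)) (hμ : μ (Iio 0) = 0)
    (hM : ∀ k : ℕ, μ (Ico (k : ℝ) (k + 1)) ≤ M) {y : ℝ} (hy : y < 0) :
    ∫⁻ z, ENNReal.ofReal (V (y - z)) ∂μ ≤ ∑' k : ℕ, ENNReal.ofReal (V (k - y)) * M := by
  have hanti_y : AntitoneOn (fun z => ENNReal.ofReal (V (z - y))) (Ici 0) :=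
    fun a ha b hb hab => ENNReal.ofReal_le_ofReal <|
      hanti (mem_Ioi.2 (by linarith [mem_Ici.1 ha])) (mem_Ioi.2 (by linarith [mem_Ici.1 hb]))
        (by linarith)
  calc ∫⁻ z, ENNReal.ofReal (V (y - z)) ∂μ = ∫⁻ z, ENNReal.ofReal (V (z - y)) ∂μ := by
        congr 1 with z; rw [← heven, neg_sub]
    _ ≤ _ := lintegral_le_tsum_mul_of_antitoneOn hanti_y hμ hM

theorem setLIntegral_Iio_lintegral_ofReal_sub_le {V : ℝ → ℝ} {μ : Measure ℝ} {M : ℝ≥0∞}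
    (heven : ∀ x, V (-x) = V x) (hanti : AntitoneOn V (Ioi 0)) (hV : AEMeasurable V)
    (hμ : μ (Iio 0) = 0) (hM : ∀ k : ℕ, μ (Ico (k : ℝ) (k + 1)) ≤ M) :
    ∫⁻ y in Iio 0, ∫⁻ z, ENNReal.ofReal (V (y - z)) ∂μ ≤
      (∑' k : ℕ, ∫⁻ y in Ioi (k : ℝ), ENNReal.ofReal (V y)) * M := by
  have hmeas (k : ℕ) :
      AEMeasurable (fun y => ENNReal.ofReal (V (k - y))) (volume.restrict (Iio 0)) :=
    (hV.comp_quasiMeasurePreserving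
      (Measure.measurePreserving_sub_left volume (k : ℝ)).quasiMeasurePreserving).ennreal_ofReal
      |>.restrict
  calc ∫⁻ y in Iio 0, ∫⁻ z, ENNReal.ofReal (V (y - z)) ∂μ
      ≤ ∫⁻ y in Iio 0, ∑' k : ℕ, ENNReal.ofReal (V (k - y)) * M :=
        setLIntegral_mono' measurableSet_Iio fun y hy =>
          lintegral_ofReal_sub_le_tsum heven hanti hμ hM hy
    _ = ∑' k : ℕ, (∫⁻ y in Iio 0, ENNReal.ofReal (V (k - y))) * M := by
        rw [lintegral_tsum fun k => (hmeas k).mul_const _]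
        exact tsum_congr fun k => lintegral_mul_const'' _ (hmeas k)
    _ = _ := by
        simp only [lintegral_Iio_zero_comp_sub_left fun t => ENNReal.ofReal (V t)]
        exact ENNReal.tsum_mul_right

theorem stmt6 (V : ℝ → ℝ) (μ : Measure ℝ) (m : ℝ)
    (hVnonneg : ∀ x, 0 ≤ V x) (heven : ∀ x, V (-x) = V x)
    (hanti : AntitoneOn V (Set.Ioi 0))
    (hint : Integrable V)
    (hmom : Integrable (fun x => |x| * V x))
    (hμsupp : μ (Set.Iio 0) = 0)
    (hm : ∀ x : ℝ, 0 ≤ x → μ (Set.Icc x (x + 1)) ≤ ENNReal.ofReal m) :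
    (∫⁻ y in Set.Iio 0, ∫⁻ z, ENNReal.ofReal (V (y - z)) ∂μ) ≤
      (∑' k : ℕ, ENNReal.ofReal (∫ y in Set.Ici (k : ℝ), V y)) * ENNReal.ofReal m ∧
    (∑' k : ℕ, ENNReal.ofReal (∫ y in Set.Ici (k : ℝ), V y)) < ⊤ := by
  have hcell (k : ℕ) : μ (Ico (k : ℝ) (k + 1)) ≤ ENNReal.ofReal m :=
    (measure_mono Ico_subset_Icc_self).trans (hm k k.cast_nonneg)
  simp only [ofReal_setIntegral_Ici_eq_setLIntegral_Ioi hint hVnonneg]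
  exact ⟨setLIntegral_Iio_lintegral_ofReal_sub_le heven hanti hint.aemeasurable hμsupp hcell,
    tsum_setLIntegral_Ioi_natCast_lt_top hint hmom⟩
end

section
/- Let V be nonnegative, even, integrable, and non-increasing on (0,∞) with ∫_0^1 V > 0. Then for any nonnegative Radon measure μ on [0,∞) and any x ≥ 0, μ([x,x+1]) ≤ (∫_0^1 V)^{-1} ∫_x^{x+1} (V * μ)(y) dy. -/
/-!
For `z ∈ [x, x + 1]` the integral of `y ↦ V (y - z)` over `[x, x + 1]` is the integral of `V`
over a unit interval containing `0`, which is at least `∫ 0..1, V` because `V` is even and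
decreasing away from `0`. Integrating this bound in `z` against `μ` over `[x, x + 1]` and
exchanging the order of integration (Tonelli) gives the inequality. Tonelli needs `V` to be
measurable, which follows from its monotonicity on both half-lines.
-/

open MeasureTheory Set Function

open scoped ENNReal

theorem AntitoneOn.measurable_domRestrict {α β : Type*} [LinearOrder α] [TopologicalSpace α]
    [OrderClosedTopology α] [MeasurableSpace α] [BorelSpace α] [TopologicalSpace β]
    [MeasurableSpace β] [BorelSpace β] [LinearOrder β] [OrderTopology β]
    [SecondCountableTopology β] {f : α → β} {s : Set α} (hf : AntitoneOn f s) :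
    Measurable (s.domRestrict f) :=
  Antitone.measurable fun _ _ hxy => hf (Subtype.prop _) (Subtype.prop _) hxy

theorem measurable_of_even_of_antitoneOn {β : Type*} [TopologicalSpace β]
    [MeasurableSpace β] [BorelSpace β] [LinearOrder β] [OrderTopology β]
    [SecondCountableTopology β] {V : ℝ → β} (heven : ∀ x, V (-x) = V x)
    (hanti : AntitoneOn V (Ioi 0)) : Measurable V := by
  refine measurable_of_restrict_of_restrict_compl (measurableSet_singleton 0)
    Subsingleton.measurable ?_
  have hV_abs : ({0}ᶜ : Set ℝ).domRestrict V =
      (Ioi 0).domRestrict V ∘ fun t => ⟨|t.1|, abs_pos.2 t.2⟩ := by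
    ext ⟨t, -⟩
    rcases abs_choice t with h | h <;> simp [Set.domRestrict, h, heven]
  rw [hV_abs]
  exact hanti.measurable_domRestrict.comp measurable_subtype_coe.abs.subtype_mk

theorem measure_mul_le_setLIntegral_lintegral {α β : Type*} [MeasurableSpace α]
    [MeasurableSpace β] {μ : Measure α} {ν : Measure β} [SFinite μ] [SFinite ν]
    {f : α → β → ℝ≥0∞} (hf : Measurable (uncurry f)) {s : Set α} (hs : MeasurableSet s)
    {t : Set β} {c : ℝ≥0∞} (hc : ∀ z ∈ s, c ≤ ∫⁻ y in t, f z y ∂ν) :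
    μ s * c ≤ ∫⁻ y in t, ∫⁻ z, f z y ∂μ ∂ν :=
  calc μ s * c = ∫⁻ _ in s, c ∂μ := by rw [setLIntegral_const, mul_comm]
    _ ≤ ∫⁻ z in s, ∫⁻ y in t, f z y ∂ν ∂μ := setLIntegral_mono' hs hc
    _ = ∫⁻ y in t, ∫⁻ z in s, f z y ∂μ ∂ν := lintegral_lintegral_swap hf.aemeasurable
    _ ≤ ∫⁻ y in t, ∫⁻ z, f z y ∂μ ∂ν :=
        lintegral_mono fun _ => setLIntegral_le_lintegral _ _

theorem intervalIntegral_comp_add_right_le_of_antitoneOn {f : ℝ → ℝ} (hf : Integrable f)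
    (hanti : AntitoneOn f (Ioi 0)) {a c : ℝ} (ha : 0 ≤ a) (hc : 0 ≤ c) :
    ∫ t in (0 : ℝ)..a, f (t + c) ≤ ∫ t in (0 : ℝ)..a, f t :=
  intervalIntegral.integral_mono_on_of_le_Ioo ha (hf.comp_add_right c).intervalIntegrable
    hf.intervalIntegrable fun _ ht =>
      hanti ht.1 (mem_Ioi.2 (by linarith [ht.1])) (le_add_of_nonneg_right hc)

theorem intervalIntegral_le_of_even_of_antitoneOn {V : ℝ → ℝ} (hint : Integrable V)
    (heven : ∀ x, V (-x) = V x) (hanti : AntitoneOn V (Ioi 0)) {b L : ℝ} (hb : b ≤ 0)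
    (hbL : 0 ≤ b + L) :
    ∫ t in (0 : ℝ)..L, V t ≤ ∫ t in b..b + L, V t := by
  -- Both sides contain `∫ 0..b+L`; the rest is `∫ b..0 = ∫ 0..-b` on the right and
  -- `∫ b+L..L`, a translate of `∫ 0..-b` away from `0`, on the left.
  have hII : ∀ p q : ℝ, IntervalIntegrable V volume p q := fun _ _ => hint.intervalIntegrable
  have hleft : ∫ t in b..0, V t = ∫ t in (0 : ℝ)..-b, V t := by
    simpa [heven] using (intervalIntegral.integral_comp_neg (a := 0) (b := -b) V).symm
  have htail : ∫ t in b + L..L, V t = ∫ t in (0 : ℝ)..-b, V (t + (b + L)) := by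
    rw [intervalIntegral.integral_comp_add_right]
    ring_nf
  have hshift := intervalIntegral_comp_add_right_le_of_antitoneOn hint hanti
    (neg_nonneg.2 hb) hbL
  rw [← intervalIntegral.integral_add_adjacent_intervals (hII 0 (b + L)) (hII _ L),
    ← intervalIntegral.integral_add_adjacent_intervals (hII b 0) (hII 0 (b + L))]
  linarith

theorem stmt7_general (V : ℝ → ℝ) (μ : Measure ℝ) [IsLocallyFiniteMeasure μ]
    (hVnonneg : ∀ x, 0 ≤ V x) (heven : ∀ x, V (-x) = V x)
    (hanti : AntitoneOn V (Set.Ioi 0))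
    (hint : Integrable V)
    (x : ℝ) :
    μ (Set.Icc x (x + 1)) * ENNReal.ofReal (∫ y in (0:ℝ)..1, V y) ≤
      ∫⁻ y in Set.Icc x (x + 1), ∫⁻ z, ENNReal.ofReal (V (y - z)) ∂μ := by
  refine measure_mul_le_setLIntegral_lintegral (f := fun z y => ENNReal.ofReal (V (y - z)))
    ((measurable_of_even_of_antitoneOn heven hanti).comp
      (measurable_snd.sub measurable_fst)).ennreal_ofReal measurableSet_Icc fun z hz => ?_
  rw [← ofReal_integral_eq_lintegral_ofReal (hint.comp_sub_right z).integrableOn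
      (ae_of_all _ fun _ => hVnonneg _), integral_Icc_eq_integral_Ioc,
    ← intervalIntegral.integral_of_le (by linarith), intervalIntegral.integral_comp_sub_right]
  refine ENNReal.ofReal_le_ofReal ?_
  rw [show x + 1 - z = x - z + 1 by ring]
  exact intervalIntegral_le_of_even_of_antitoneOn hint heven hanti (by linarith [hz.1])
    (by linarith [hz.2])

theorem stmt7 (V : ℝ → ℝ) (μ : Measure ℝ) [IsLocallyFiniteMeasure μ]
    (hVnonneg : ∀ x, 0 ≤ V x) (heven : ∀ x, V (-x) = V x)
    (hanti : AntitoneOn V (Set.Ioi 0))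
    (hint : Integrable V)
    (hμsupp : μ (Set.Iio 0) = 0)
    (x : ℝ) (hx : 0 ≤ x) :
    μ (Set.Icc x (x + 1)) * ENNReal.ofReal (∫ y in (0:ℝ)..1, V y) ≤
      ∫⁻ y in Set.Icc x (x + 1), ∫⁻ z, ENNReal.ofReal (V (y - z)) ∂μ :=
  stmt7_general V μ hVnonneg heven hanti hint x
end
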